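/- arXiv:2204.09262 — 2 statements merged into one kernel-verified Lean document; each statement's English description precedes it below -/
import Mathlib

section
/- For every array X and every integer e: (i) 𝓡_e(X^op) = (−1)^e · 𝓡_e(X); (ii) op(𝓡_e(X)) = (−1)^{d(X)} · 𝓡_{e+Def(X)}(X). Consequently, if |X^♯| is odd and Def(X) is even, then op(𝓡_e(X)) = −𝓡_e(X), so 𝓡_e(X) lies in the ℂ-span of the elements Y − Y^op over arrays Y. -/
open Finset

namespace ArrayComb

/-- Cells of an array: an element of ℤ × ℤ/2ℤ (arrays are those supported on ℕ × ℤ/2ℤ). -/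
abbrev Cell : Type := ℤ × ZMod 2

/-- An array is a finite subset of ℕ × ℤ/2ℤ. -/
def IsArray (X : Finset Cell) : Prop := ∀ c ∈ X, 0 ≤ c.1

/-- The row `Xʲ = {x : (x,j) ∈ X}`. -/
def row (X : Finset Cell) (j : ZMod 2) : Finset ℤ :=
  (X.filter fun c => c.2 = j).image Prod.fst

def cup (X : Finset Cell) : Finset ℤ := row X 0 ∪ row X 1
def cap (X : Finset Cell) : Finset ℤ := row X 0 ∩ row X 1
def sdiff' (X : Finset Cell) : Finset ℤ := symmDiff (row X 0) (row X 1)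

/-- The pairing `⟨A,B⟩ = |A ∩ B| mod 2`. -/
def pairing (A B : Finset ℤ) : ZMod 2 := ((A ∩ B).card : ZMod 2)

/-- The defect `Def(X) = |X⁰| - |X¹|`. -/
def defect (X : Finset Cell) : ℤ := ((row X 0).card : ℤ) - ((row X 1).card : ℤ)

/-- The special array `X_sp`. -/
noncomputable def sp (X : Finset Cell) : Finset Cell :=
  ((cap X) ×ˢ (Finset.univ : Finset (ZMod 2))) ∪
    (sdiff' X).image (fun x => (x, (((sdiff' X).card : ZMod 2) + pairing (sdiff' X) (Finset.Icc 0 x))))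

/-- `X^♯ = X¹ ⊖ (X_sp)¹`. -/
noncomputable def sharp (X : Finset Cell) : Finset ℤ := symmDiff (row X 1) (row (sp X) 1)

/-- `s(X) = 2^{(|X^⊖| - Def(X_sp))/2}`. -/
noncomputable def sconst (X : Finset Cell) : ℕ := 2 ^ (((sdiff' X).card - (defect (sp X)).toNat) / 2)

/-- `d(X) = (Def(X) - Def(X_sp))/2`. -/
noncomputable def dd (X : Finset Cell) : ℤ := (defect X - defect (sp X)) / 2

/-- The map `D_{d,i}` on cells. -/
def Dcell (d : ℤ) (i : ZMod 2) (c : Cell) : Cell := (c.1 - d, i + c.2)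

/-- The map `D_{d,i}` applied elementwise to a finite set of cells. -/
def Dset (d : ℤ) (i : ZMod 2) (H : Finset Cell) : Finset Cell := H.image (Dcell d i)

/-- `X ∖_{d,i} H = X ⊖ H ⊖ D_{d,i}(H)`. -/
def remove (d : ℤ) (i : ZMod 2) (X H : Finset Cell) : Finset Cell :=
  symmDiff (symmDiff X H) (Dset d i H)

/-- The `(d,i)`-hooks of `X`. -/
def hooks (d : ℤ) (i : ZMod 2) (X : Finset Cell) : Finset Cell :=
  X.filter fun c => 0 ≤ c.1 - d ∧ Dcell d i c ∉ X

/-- The leg parity `l_{d,i}(λ, X)`. -/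
noncomputable def leg (d : ℤ) (i : ZMod 2) (c : Cell) (X : Finset Cell) : ZMod 2 :=
  pairing (Finset.Icc 0 c.1) (row X c.2) +
    pairing (Finset.Icc 0 (c.1 - d)) (row (remove d i X {c}) (i + c.2))

/-- `X^op`, interchanging the two rows. -/
def opA (X : Finset Cell) : Finset Cell := Dset 0 1 X

/-- The free ℂ-module `ℂ[𝒫]` on the set of arrays. -/
abbrev CP := Finset Cell →₀ ℂ

/-- The similarity class `Sim(X)`: all arrays `Y` with `Y^∪ = X^∪` and `Y^∩ = X^∩`,
realized as a finite set. -/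
def SimSet (X : Finset Cell) : Finset (Finset Cell) :=
  ((cup X ×ˢ (Finset.univ : Finset (ZMod 2))).powerset).filter
    (fun Y => cup Y = cup X ∧ cap Y = cap X)

/-- The Fourier transform `𝓡` on basis elements. -/
noncomputable def Rfun (X : Finset Cell) : CP :=
  (sconst X : ℂ)⁻¹ •
    ∑ Y ∈ SimSet X, ((-1 : ℂ) ^ (pairing (sharp X) (sharp Y)).val) • Finsupp.single Y (1 : ℂ)

/-- The hook-removal operator `𝓗ʲ_{d,i}` on basis elements. -/
noncomputable def Hfun (d : ℤ) (i j : ZMod 2) (X : Finset Cell) : CP :=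
  ∑ c ∈ hooks d i X,
    ((-1 : ℂ) ^ (j * c.2 + leg d i c X).val) • Finsupp.single (remove d i X {c}) (1 : ℂ)

/-- Extension of a map defined on basis elements to a ℂ-linear endomorphism of `ℂ[𝒫]`. -/
noncomputable def lift (f : Finset Cell → CP) : CP →ₗ[ℂ] CP :=
  Finsupp.linearCombination ℂ f

/-- The operator `op`, `op(X) = X^op`, on basis elements. -/
noncomputable def Ofun (X : Finset Cell) : CP := Finsupp.single (opA X) (1 : ℂ)

/-- The partial Fourier transform `𝓡_e`, summing only over `Y ∈ Sim(X)` with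
`|Y^♯| ≡ e (mod 2)`. -/
noncomputable def Refun (e : ℤ) (X : Finset Cell) : CP :=
  (sconst X : ℂ)⁻¹ •
    ∑ Y ∈ (SimSet X).filter (fun Y => ((sharp Y).card : ℤ) % 2 = e % 2),
      ((-1 : ℂ) ^ (pairing (sharp X) (sharp Y)).val) • Finsupp.single Y (1 : ℂ)

/-! `op` preserves `X^∪` and `X^∩`, hence `Sim(X)`, `X_sp` and `s(X)`, and it replaces `Y^♯` by
its complement `Y^♯ ⊖ Y^⊖` inside `Y^⊖` (`Y^♯ ⊆ Y^⊖` because `Y_sp` is similar to `Y`).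
So under `X ↦ X^op` every sign `(-1)^⟨X^♯,Y^♯⟩` picks up `(-1)^|Y^♯| = (-1)^e`, which is (i);
reindexing the sum by `Y ↦ Y^op` multiplies every sign by `(-1)^|X^♯| = (-1)^{d(X)}` and moves
the parity class `e` to `|X^⊖| - e ≡ e + Def(X)`, which is (ii). When `|X^♯|` is odd and `Def(X)`
even, (ii) says `op v = -v` for `v = 𝓡_e(X)`, and then `v = (v - op v)/2`. -/

section Parity

variable {α : Type*} [DecidableEq α]

lemma card_symmDiff_add_two_mul_card_inter (s t : Finset α) :
    #(symmDiff s t) + 2 * #(s ∩ t) = #s + #t := by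
  rw [symmDiff_def, sup_eq_union, card_union_of_disjoint disjoint_sdiff_sdiff, card_sdiff,
    card_sdiff, inter_comm t s]
  have := card_le_card (inter_subset_left : s ∩ t ⊆ s)
  have := card_le_card (inter_subset_right : s ∩ t ⊆ t)
  omega

lemma natCast_card_symmDiff_zmod_two (s t : Finset α) :
    (#(symmDiff s t) : ZMod 2) = #s + #t := by
  rw [← Nat.cast_add, ZMod.natCast_eq_natCast_iff']
  have := card_symmDiff_add_two_mul_card_inter s t
  omega

variable {R : Type*} [Ring R]

lemma neg_one_pow_val_add (v w : ZMod 2) :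
    (-1 : R) ^ (v + w).val = (-1) ^ v.val * (-1) ^ w.val := by
  rw [ZMod.val_add, ← neg_one_pow_eq_pow_mod_two, pow_add]

lemma neg_one_pow_val_natCast (n : ℕ) : (-1 : R) ^ (n : ZMod 2).val = (-1) ^ n := by
  rw [ZMod.val_natCast, ← neg_one_pow_eq_pow_mod_two]

end Parity

lemma neg_one_zpow_eq_pow_of_emod_two_eq {G : Type*} [DivisionMonoid G] [HasDistribNeg G]
    {m : ℤ} {n : ℕ} (h : (n : ℤ) % 2 = m % 2) : (-1 : G) ^ m = (-1) ^ n := by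
  rw [← zpow_natCast]
  simp only [neg_one_zpow_eq_ite, Int.even_iff, h]

lemma pairing_comm (A B : Finset ℤ) : pairing A B = pairing B A := by
  rw [pairing, pairing, inter_comm]

lemma pairing_symmDiff_left (A B C : Finset ℤ) :
    pairing (symmDiff A B) C = pairing A C + pairing B C := by
  rw [pairing, pairing, pairing, ← natCast_card_symmDiff_zmod_two]
  exact congrArg _ (congrArg _ (inf_symmDiff_distrib_right A B C))

lemma pairing_of_subset {A B : Finset ℤ} (h : B ⊆ A) : pairing A B = #B := by
  rw [pairing, inter_eq_right.mpr h]

lemma mem_row {X : Finset Cell} {x : ℤ} {j : ZMod 2} : x ∈ row X j ↔ (x, j) ∈ X := by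
  simp [row]

lemma mem_cup {X : Finset Cell} {x : ℤ} : x ∈ cup X ↔ ∃ j, (x, j) ∈ X := by
  simp only [cup, mem_union, mem_row]
  constructor
  · rintro (h | h) <;> exact ⟨_, h⟩
  · rintro ⟨j, h⟩
    fin_cases j
    exacts [Or.inl h, Or.inr h]

lemma row_subset_cup (X : Finset Cell) (j : ZMod 2) : row X j ⊆ cup X :=
  fun _ h => mem_cup.2 ⟨j, mem_row.1 h⟩

lemma cap_subset_row (X : Finset Cell) (j : ZMod 2) : cap X ⊆ row X j := by
  fin_cases j
  exacts [inter_subset_left, inter_subset_right]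

lemma sdiff'_eq_cup_sdiff_cap (X : Finset Cell) : sdiff' X = cup X \ cap X :=
  symmDiff_eq_sup_sdiff_inf _ _

lemma Dcell_zero_one_involutive : Function.Involutive (Dcell 0 1) := fun c =>
  Prod.ext (by simp [Dcell]) (by simp only [Dcell]; grind)

lemma mem_opA {X : Finset Cell} {c : Cell} : c ∈ opA X ↔ Dcell 0 1 c ∈ X := by
  simp only [opA, Dset, mem_image]
  constructor
  · rintro ⟨a, ha, rfl⟩
    rwa [Dcell_zero_one_involutive]
  · exact fun h => ⟨_, h, Dcell_zero_one_involutive c⟩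

lemma opA_opA (X : Finset Cell) : opA (opA X) = X := by
  ext c
  rw [mem_opA, mem_opA, Dcell_zero_one_involutive]

lemma row_opA (X : Finset Cell) (j : ZMod 2) : row (opA X) j = row X (1 + j) := by
  ext x
  simp [mem_row, mem_opA, Dcell]

lemma cup_opA (X : Finset Cell) : cup (opA X) = cup X := by
  rw [cup, row_opA, row_opA]
  exact union_comm _ _

lemma cap_opA (X : Finset Cell) : cap (opA X) = cap X := by
  rw [cap, row_opA, row_opA]
  exact inter_comm _ _

lemma sdiff'_opA (X : Finset Cell) : sdiff' (opA X) = sdiff' X := by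
  rw [sdiff', row_opA, row_opA]
  exact symmDiff_comm _ _

lemma sp_opA (X : Finset Cell) : sp (opA X) = sp X := by
  rw [sp, sp, cap_opA, sdiff'_opA]

lemma sconst_opA (X : Finset Cell) : sconst (opA X) = sconst X := by
  rw [sconst, sconst, sdiff'_opA, sp_opA]

lemma sharp_opA (X : Finset Cell) : sharp (opA X) = symmDiff (sharp X) (sdiff' X) := by
  rw [sharp, sharp, sp_opA, row_opA, show (1 + 1 : ZMod 2) = 0 from rfl, sdiff']
  ext x
  simp only [mem_symmDiff]
  tauto

lemma mem_SimSet {X Y : Finset Cell} : Y ∈ SimSet X ↔ cup Y = cup X ∧ cap Y = cap X := by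
  simp only [SimSet, mem_filter, mem_powerset, and_iff_right_iff_imp]
  rintro ⟨hcup, -⟩ c hc
  rw [← hcup, mem_product, mem_cup]
  exact ⟨⟨c.2, hc⟩, mem_univ _⟩

lemma SimSet_opA (X : Finset Cell) : SimSet (opA X) = SimSet X := by
  rw [SimSet, SimSet, cup_opA, cap_opA]

lemma opA_mem_SimSet {X Y : Finset Cell} (h : Y ∈ SimSet X) : opA Y ∈ SimSet X := by
  rwa [mem_SimSet, cup_opA, cap_opA, ← mem_SimSet]

lemma isArray_of_mem_SimSet {X Y : Finset Cell} (hX : IsArray X) (h : Y ∈ SimSet X) :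
    IsArray Y := fun c hc => by
  obtain ⟨j, hj⟩ := mem_cup.1 ((mem_SimSet.1 h).1 ▸ mem_cup.2 ⟨c.2, hc⟩)
  exact hX (c.1, j) hj

lemma sdiff'_eq_of_mem_SimSet {X Y : Finset Cell} (h : Y ∈ SimSet X) : sdiff' Y = sdiff' X := by
  rw [sdiff'_eq_cup_sdiff_cap, sdiff'_eq_cup_sdiff_cap, (mem_SimSet.1 h).1, (mem_SimSet.1 h).2]

lemma card_row_add_card_row_of_mem_SimSet {X Y : Finset Cell} (h : Y ∈ SimSet X) :
    #(row Y 0) + #(row Y 1) = #(row X 0) + #(row X 1) := by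
  obtain ⟨hcup, hcap⟩ := mem_SimSet.1 h
  rw [← card_union_add_card_inter (row Y 0), ← card_union_add_card_inter (row X 0)]
  exact congrArg₂ (#· + #·) hcup hcap

lemma symmDiff_row_subset_sdiff'_of_mem_SimSet {X Y : Finset Cell} (h : Y ∈ SimSet X)
    (j : ZMod 2) : symmDiff (row X j) (row Y j) ⊆ sdiff' X := by
  obtain ⟨hcup, hcap⟩ := mem_SimSet.1 h
  intro x hx
  rw [sdiff'_eq_cup_sdiff_cap, mem_sdiff]
  rcases mem_symmDiff.1 hx with ⟨hX, hY⟩ | ⟨hY, hX⟩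
  · exact ⟨row_subset_cup X j hX, fun hx => hY (cap_subset_row Y j (hcap ▸ hx))⟩
  · exact ⟨hcup ▸ row_subset_cup Y j hY, fun hx => hX (cap_subset_row X j hx)⟩

lemma mem_row_sp {X : Finset Cell} {x : ℤ} {j : ZMod 2} :
    x ∈ row (sp X) j ↔
      x ∈ cap X ∨ x ∈ sdiff' X ∧ #(sdiff' X) + pairing (sdiff' X) (Icc 0 x) = j := by
  simp [mem_row, sp]

lemma cap_sp (X : Finset Cell) : cap (sp X) = cap X := by
  ext x
  rw [cap, mem_inter, mem_row_sp, mem_row_sp]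
  constructor
  · rintro ⟨h | ⟨-, h0⟩, h' | ⟨-, h1⟩⟩
    exacts [h, h, h', absurd (h0.symm.trans h1) zero_ne_one]
  · exact fun h => ⟨Or.inl h, Or.inl h⟩

lemma cup_sp (X : Finset Cell) : cup (sp X) = cup X := by
  ext x
  have hcap : x ∈ cap X → x ∈ cup X := fun h => row_subset_cup X 0 (cap_subset_row X 0 h)
  rw [cup, mem_union, mem_row_sp, mem_row_sp, ← or_or_distrib_left, ← and_or_left]
  simp only [show ∀ l : ZMod 2, l = 0 ∨ l = 1 by decide, and_true, sdiff'_eq_cup_sdiff_cap,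
    mem_sdiff]
  tauto

lemma sp_mem_SimSet (X : Finset Cell) : sp X ∈ SimSet X := mem_SimSet.2 ⟨cup_sp X, cap_sp X⟩

lemma sharp_subset_sdiff' (X : Finset Cell) : sharp X ⊆ sdiff' X :=
  symmDiff_row_subset_sdiff'_of_mem_SimSet (sp_mem_SimSet X) 1

lemma card_sharp_opA_add_card_sharp (X : Finset Cell) :
    #(sharp (opA X)) + #(sharp X) = #(sdiff' X) := by
  have hsub := sharp_subset_sdiff' X
  rw [sharp_opA, symmDiff_of_le hsub, card_sdiff_of_subset hsub]
  exact Nat.sub_add_cancel (card_le_card hsub)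

lemma defect_emod_two (X : Finset Cell) : defect X % 2 = #(sdiff' X) % 2 := by
  have := card_symmDiff_add_two_mul_card_inter (row X 0) (row X 1)
  rw [defect, sdiff']
  omega

lemma dd_emod_two (X : Finset Cell) : dd X % 2 = #(sharp X) % 2 := by
  have hsp := card_row_add_card_row_of_mem_SimSet (sp_mem_SimSet X)
  have := card_symmDiff_add_two_mul_card_inter (row X 1) (row (sp X) 1)
  rw [dd, defect, defect, sharp]
  omega

lemma pairing_sharp_opA_left {X : Finset Cell} {A : Finset ℤ} (h : A ⊆ sdiff' X) :
    pairing (sharp (opA X)) A = pairing (sharp X) A + #A := by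
  rw [sharp_opA, pairing_symmDiff_left, pairing_of_subset h]

lemma pairing_sharp_opA_right {X Y : Finset Cell} (h : Y ∈ SimSet X) :
    pairing (sharp X) (sharp (opA Y)) = pairing (sharp X) (sharp Y) + #(sharp X) := by
  rw [pairing_comm, pairing_sharp_opA_left (sdiff'_eq_of_mem_SimSet h ▸ sharp_subset_sdiff' X),
    pairing_comm]

lemma opA_mem_filter {X Y : Finset Cell} {e e' : ℤ} (he : (e + e') % 2 = #(sdiff' X) % 2)
    (hY : Y ∈ (SimSet X).filter fun Z => (#(sharp Z) : ℤ) % 2 = e % 2) :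
    opA Y ∈ (SimSet X).filter fun Z => (#(sharp Z) : ℤ) % 2 = e' % 2 := by
  obtain ⟨hY, hYe⟩ := mem_filter.1 hY
  have := card_sharp_opA_add_card_sharp Y
  rw [sdiff'_eq_of_mem_SimSet hY] at this
  exact mem_filter.2 ⟨opA_mem_SimSet hY, by omega⟩

lemma Refun_eq_of_emod_two_eq {e e' : ℤ} (h : e % 2 = e' % 2) (X : Finset Cell) :
    Refun e X = Refun e' X := by
  rw [Refun, Refun, h]

theorem Refun_opA (e : ℤ) (X : Finset Cell) : Refun e (opA X) = (-1 : ℂ) ^ e • Refun e X := by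
  rw [Refun, Refun, SimSet_opA, sconst_opA, smul_comm ((-1 : ℂ) ^ e)]
  congr 1
  rw [Finset.smul_sum]
  refine Finset.sum_congr rfl fun Y hY => ?_
  obtain ⟨hY, he⟩ := mem_filter.1 hY
  have hsub : sharp Y ⊆ sdiff' X := sdiff'_eq_of_mem_SimSet hY ▸ sharp_subset_sdiff' Y
  rw [smul_smul, pairing_sharp_opA_left hsub, neg_one_pow_val_add, neg_one_pow_val_natCast,
    neg_one_zpow_eq_pow_of_emod_two_eq he, mul_comm]

lemma lift_Ofun_single (Y : Finset Cell) :
    lift Ofun (Finsupp.single Y 1) = Finsupp.single (opA Y) 1 := by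
  rw [lift, Finsupp.linearCombination_single, one_smul, Ofun]

theorem lift_Ofun_Refun (e : ℤ) (X : Finset Cell) :
    lift Ofun (Refun e X) = (-1 : ℂ) ^ dd X • Refun (e + defect X) X := by
  have he : (e + (e + defect X)) % 2 = #(sdiff' X) % 2 := by
    have := defect_emod_two X
    omega
  rw [Refun, Refun, map_smul, map_sum, smul_comm ((-1 : ℂ) ^ dd X)]
  congr 1
  rw [Finset.smul_sum]
  refine Finset.sum_nbij' opA opA (fun Y hY => opA_mem_filter he hY)
    (fun Y hY => opA_mem_filter (by rwa [add_comm]) hY)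
    (fun Y _ => opA_opA Y) (fun Y _ => opA_opA Y) fun Y hY => ?_
  rw [map_smul, lift_Ofun_single, smul_smul, pairing_sharp_opA_right (mem_filter.1 hY).1,
    neg_one_pow_val_add, neg_one_pow_val_natCast,
    neg_one_zpow_eq_pow_of_emod_two_eq (dd_emod_two X).symm, mul_left_comm, ← pow_add,
    Even.neg_one_pow ⟨_, rfl⟩, mul_one]

lemma Refun_mem_span_single {X : Finset Cell} (hX : IsArray X) (e : ℤ) :
    Refun e X ∈ Submodule.span ℂ {v : CP | ∃ Y, IsArray Y ∧ v = Finsupp.single Y 1} :=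
  Submodule.smul_mem _ _ <| Submodule.sum_mem _ fun Y hY => Submodule.smul_mem _ _ <|
    Submodule.subset_span ⟨Y, isArray_of_mem_SimSet hX (mem_filter.1 hY).1, rfl⟩

lemma sub_lift_Ofun_mem_span {v : CP}
    (hv : v ∈ Submodule.span ℂ {w : CP | ∃ Y, IsArray Y ∧ w = Finsupp.single Y 1}) :
    v - lift Ofun v ∈ Submodule.span ℂ
      {w : CP | ∃ Y, IsArray Y ∧ w = Finsupp.single Y 1 - Finsupp.single (opA Y) 1} := by
  induction hv using Submodule.span_induction with
  | mem w hw =>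
    obtain ⟨Y, hY, rfl⟩ := hw
    rw [lift_Ofun_single]
    exact Submodule.subset_span ⟨Y, hY, rfl⟩
  | zero => simp
  | add v w _ _ hv hw =>
    rw [map_add, add_sub_add_comm]
    exact add_mem hv hw
  | smul a v _ hv =>
    rw [map_smul, ← smul_sub]
    exact Submodule.smul_mem _ a hv

lemma mem_span_of_lift_Ofun_eq_neg {v : CP}
    (hv : v ∈ Submodule.span ℂ {w : CP | ∃ Y, IsArray Y ∧ w = Finsupp.single Y 1})
    (hop : lift Ofun v = -v) :
    v ∈ Submodule.span ℂ
      {w : CP | ∃ Y, IsArray Y ∧ w = Finsupp.single Y 1 - Finsupp.single (opA Y) 1} := by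
  have hv2 : v = (2 : ℂ)⁻¹ • (v - lift Ofun v) := by
    rw [hop, sub_neg_eq_add, ← two_smul ℂ v, smul_smul, inv_mul_cancel₀ two_ne_zero, one_smul]
  rw [hv2]
  exact Submodule.smul_mem _ _ (sub_lift_Ofun_mem_span hv)

/-- Behaviour of the partial Fourier transforms `𝓡_e` under `op`:
(i) `𝓡_e(X^op) = (-1)^e 𝓡_e(X)`; (ii) `op(𝓡_e(X)) = (-1)^{d(X)} 𝓡_{e+Def(X)}(X)`;
consequently, if `|X^♯|` is odd and `Def(X)` is even, then `op(𝓡_e(X)) = -𝓡_e(X)` and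
`𝓡_e(X)` lies in the span of the elements `Y - Y^op`. -/
theorem Refun_op (e : ℤ) (X : Finset Cell) (hX : IsArray X) :
    Refun e (opA X) = ((-1 : ℂ) ^ e) • Refun e X ∧
    lift Ofun (Refun e X) = ((-1 : ℂ) ^ (dd X)) • Refun (e + defect X) X ∧
    (Odd (sharp X).card → Even (defect X) →
      lift Ofun (Refun e X) = - Refun e X ∧
      Refun e X ∈ Submodule.span ℂ
        {v : CP | ∃ Y : Finset Cell, IsArray Y ∧
          v = Finsupp.single Y (1 : ℂ) - Finsupp.single (opA Y) (1 : ℂ)}) := by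
  refine ⟨Refun_opA e X, lift_Ofun_Refun e X, fun hsharp hdefect => ?_⟩
  have hdd : Odd (dd X) := by
    rw [Int.odd_iff, dd_emod_two]
    rw [Nat.odd_iff] at hsharp
    omega
  have hop : lift Ofun (Refun e X) = -Refun e X := by
    have he : (e + defect X) % 2 = e % 2 := by
      rw [Int.even_iff] at hdefect
      omega
    rw [lift_Ofun_Refun, hdd.neg_one_zpow, neg_one_smul, Refun_eq_of_emod_two_eq he]
  exact ⟨hop, mem_span_of_lift_Ofun_eq_neg (Refun_mem_span_single hX e) hop⟩

end ArrayComb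
end

section
/- Let n ≥ 1 be an integer and i ∈ ℤ/2ℤ. Then every array X of rank n has at most one (n,i)-hook, i.e. |𝓗_{n,i}(X)| ≤ 1. -/
open Finset

namespace ArrayComb

/-- The rank `rk(X) = Σ_{x∈X⁰} x + Σ_{x∈X¹} x - ⌊((|X|-1)/2)²⌋`. -/
def rk (X : Finset Cell) : ℤ :=
  (∑ x ∈ row X 0, x) + (∑ x ∈ row X 1, x) - ((X.card : ℤ) - 1) ^ 2 / 4

/-!
Removing a `(d,i)`-hook `λ` moves one bead from `λ` to the free position `D_{d,i}(λ)`: this keeps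
`|X|` and lowers the bead sum, hence the rank, by exactly `d`, and every other hook of `X` is still a
hook afterwards. Removing `k` hooks one after the other therefore lowers the rank by `k d`. On the other
hand the rank of an array is nonnegative, since the `m` distinct entries of a row sum to at least
`m(m-1)/2`. So an array with `k` hooks satisfies `k d ≤ rk X`, and for `d = rk X ≥ 1` this forces
`k ≤ 1`.
-/

lemma dcell_injective (d : ℤ) (i : ZMod 2) : Function.Injective (Dcell d i) := by
  rintro ⟨x, j⟩ ⟨y, k⟩ h
  simp only [Dcell, Prod.mk.injEq, sub_left_inj, add_right_inj] at h
  rw [h.1, h.2]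

lemma sum_row {M : Type*} [AddCommMonoid M] (X : Finset Cell) (j : ZMod 2) (f : ℤ → M) :
    ∑ x ∈ row X j, f x = ∑ c ∈ X with c.2 = j, f c.1 := by
  refine sum_image fun a ha b hb h => Prod.ext h ?_
  exact (mem_filter.mp ha).2.trans (mem_filter.mp hb).2.symm

lemma sum_row_zero_add_sum_row_one {M : Type*} [AddCommMonoid M] (X : Finset Cell) (f : ℤ → M) :
    ∑ x ∈ row X 0, f x + ∑ x ∈ row X 1, f x = ∑ c ∈ X, f c.1 := by
  have hne : ∀ j : ZMod 2, ¬j = 0 ↔ j = 1 := by decide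
  rw [sum_row, sum_row, ← sum_filter_add_sum_filter_not X (fun c => c.2 = 0)]
  simp only [hne]

lemma card_row_zero_add_card_row_one (X : Finset Cell) :
    #(row X 0) + #(row X 1) = #X := by
  simpa only [card_eq_sum_ones] using sum_row_zero_add_sum_row_one X fun _ => 1

lemma rk_eq_sum_sub (X : Finset Cell) :
    rk X = ∑ c ∈ X, c.1 - ((#X : ℤ) - 1) ^ 2 / 4 := by
  rw [rk, sum_row_zero_add_sum_row_one X fun x => x]

lemma card_mul_card_sub_one_le_two_mul_sum {s : Finset ℤ} (hs : ∀ x ∈ s, 0 ≤ x) :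
    (#s : ℤ) * (#s - 1) ≤ 2 * ∑ x ∈ s, x := by
  have gauss : ∀ k : ℕ, 2 * ∑ n ∈ range k, ((0 : ℤ) + n) = k * (k - 1) := by
    intro k
    induction k with
    | zero => simp
    | succ k ih => rw [sum_range_succ, mul_add, ih]; push_cast; ring
  linarith [gauss #s, sum_range_le_sum hs]

lemma rk_nonneg {X : Finset Cell} (hX : IsArray X) : 0 ≤ rk X := by
  have hrow : ∀ j, ∀ x ∈ row X j, 0 ≤ x := by
    intro j x hx
    obtain ⟨c, hc, rfl⟩ := mem_image.mp hx
    exact hX c (mem_filter.mp hc).1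
  have h0 := card_mul_card_sub_one_le_two_mul_sum (hrow 0)
  have h1 := card_mul_card_sub_one_le_two_mul_sum (hrow 1)
  have hcard : (#X : ℤ) = #(row X 0) + #(row X 1) := by
    exact_mod_cast (card_row_zero_add_card_row_one X).symm
  -- `2a(a-1) + 2b(b-1) + 1 - (a+b-1)² = (a-b)²`
  have key : ((#X : ℤ) - 1) ^ 2 ≤ 4 * ((∑ x ∈ row X 0, x) + ∑ x ∈ row X 1, x) + 1 := by
    rw [hcard]
    nlinarith [sq_nonneg ((#(row X 0) : ℤ) - #(row X 1))]
  rw [rk]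
  omega

section HookRemoval

variable {d : ℤ} {i : ZMod 2} {X : Finset Cell} {c : Cell}

lemma mem_hooks : c ∈ hooks d i X ↔ c ∈ X ∧ 0 ≤ c.1 - d ∧ Dcell d i c ∉ X :=
  mem_filter

lemma remove_singleton_of_mem_hooks (hc : c ∈ hooks d i X) :
    remove d i X {c} = insert (Dcell d i c) (X.erase c) := by
  obtain ⟨hcX, -, hdX⟩ := mem_hooks.mp hc
  have hcd : c ≠ Dcell d i c := fun h => hdX (h ▸ hcX)
  ext a
  simp only [remove, Dset, image_singleton, mem_symmDiff, mem_singleton, mem_insert, mem_erase]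
  by_cases h1 : a = c <;> by_cases h2 : a = Dcell d i c <;> simp_all

lemma IsArray.remove_of_mem_hooks (hX : IsArray X) (hc : c ∈ hooks d i X) :
    IsArray (remove d i X {c}) := by
  rw [remove_singleton_of_mem_hooks hc]
  intro a ha
  rcases mem_insert.mp ha with rfl | ha
  · exact (mem_hooks.mp hc).2.1
  · exact hX a (mem_of_mem_erase ha)

lemma rk_remove_of_mem_hooks (hc : c ∈ hooks d i X) : rk (remove d i X {c}) = rk X - d := by
  obtain ⟨hcX, -, hdX⟩ := mem_hooks.mp hc
  have hdX' : Dcell d i c ∉ X.erase c := fun h => hdX (mem_of_mem_erase h)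
  have hcard : #(insert (Dcell d i c) (X.erase c)) = #X := by
    rw [card_insert_of_notMem hdX', card_erase_add_one hcX]
  rw [rk_eq_sum_sub, rk_eq_sum_sub, remove_singleton_of_mem_hooks hc, hcard, sum_insert hdX',
    ← sum_erase_add X _ hcX, Dcell]
  ring

lemma erase_hooks_subset_hooks_remove (hc : c ∈ hooks d i X) :
    (hooks d i X).erase c ⊆ hooks d i (remove d i X {c}) := by
  intro c' hc'
  obtain ⟨hne, hc'⟩ := mem_erase.mp hc'
  obtain ⟨hc'X, hc'd, hdc'X⟩ := mem_hooks.mp hc'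
  rw [remove_singleton_of_mem_hooks hc, mem_hooks, mem_insert, mem_insert, mem_erase, mem_erase]
  refine ⟨Or.inr ⟨hne, hc'X⟩, hc'd, ?_⟩
  rintro (h | ⟨-, h⟩)
  · exact hne (dcell_injective d i h)
  · exact hdc'X h

end HookRemoval

theorem card_hooks_mul_le_rk {d : ℤ} {i : ZMod 2} {X : Finset Cell} (hX : IsArray X) :
    (#(hooks d i X) : ℤ) * d ≤ rk X := by
  suffices ∀ k : ℕ, ∀ X, IsArray X → k ≤ #(hooks d i X) → (k : ℤ) * d ≤ rk X from
    this _ X hX le_rfl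
  intro k
  induction k with
  | zero => intro X hX _; simpa using rk_nonneg hX
  | succ k ih =>
    intro X hX hk
    obtain ⟨c, hc⟩ := card_pos.mp (by omega : 0 < #(hooks d i X))
    have hkY : k ≤ #(hooks d i (remove d i X {c})) := by
      have hsub := card_le_card (erase_hooks_subset_hooks_remove hc)
      rw [card_erase_of_mem hc] at hsub
      omega
    have hrkY := ih _ (hX.remove_of_mem_hooks hc) hkY
    rw [rk_remove_of_mem_hooks hc] at hrkY
    push_cast
    linarith

/-- An array of rank `n ≥ 1` has at most one `(n,i)`-hook. -/
theorem n_hooks (n : ℕ) (hn : 1 ≤ n) (i : ZMod 2) (X : Finset Cell) (hX : IsArray X)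
    (hrk : rk X = (n : ℤ)) : (hooks (n : ℤ) i X).card ≤ 1 := by
  have h := card_hooks_mul_le_rk (d := n) (i := i) hX
  rw [hrk] at h
  have hn' : (0 : ℤ) < n := by exact_mod_cast hn
  have hle : (#(hooks (n : ℤ) i X) : ℤ) ≤ 1 := le_of_mul_le_mul_right (by linarith) hn'
  exact_mod_cast hle

end ArrayComb
end
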